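/- For every weight vector χ = (χ₀,…,χₙ), the normalization N(χ) is a normalized weight vector and the weighted projective spaces ℙ(χ) and ℙ(N(χ)) are homeomorphic. -/

import Mathlib

noncomputable section

/-- The unit sphere `S^{2n+1} ⊂ ℂ^{n+1}`. -/
def USphere (n : ℕ) : Type := {z : Fin (n + 1) → ℂ // ∑ i, Complex.normSq (z i) = 1}

instance (n : ℕ) : TopologicalSpace (USphere n) :=
  instTopologicalSpaceSubtype

/-- The weighted `S¹`-action equivalence relation on the unit sphere. -/
def wpSetoid (n : ℕ) (χ : Fin (n + 1) → ℕ) : Setoid (USphere n) where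
  r z w := ∃ g : ℂ, ‖g‖ = 1 ∧ ∀ i, g ^ χ i * z.1 i = w.1 i
  iseqv := by
    constructor
    · exact fun z => ⟨1, by simp⟩
    · rintro z w ⟨g, hg, h⟩
      have hg0 : g ≠ 0 := by
        intro h0; rw [h0] at hg; simp at hg
      refine ⟨g⁻¹, by simp [hg], fun i => ?_⟩
      rw [← h i, ← mul_assoc, ← mul_pow, inv_mul_cancel₀ hg0, one_pow, one_mul]
    · rintro x y z ⟨g, hg, h⟩ ⟨g', hg', h'⟩
      refine ⟨g' * g, by simp [hg, hg'], fun i => ?_⟩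
      rw [← h' i, ← h i, ← mul_assoc, mul_pow]

/-- The weighted projective space `ℙ(χ)` as the quotient of the unit sphere by the
weighted circle action, with the quotient topology. -/
def WProj (n : ℕ) (χ : Fin (n + 1) → ℕ) : Type := Quotient (wpSetoid n χ)

instance (n : ℕ) (χ : Fin (n + 1) → ℕ) : TopologicalSpace (WProj n χ) :=
  instTopologicalSpaceQuotient

/-- The second-smallest element of a multiset of naturals (for a singleton multiset we
take its unique element, corresponding to normalizing a single weight to `1`). -/
def secondMin (s : Multiset ℕ) : ℕ :=
  (s.sort (· ≤ ·)).getD 1 ((s.sort (· ≤ ·)).getD 0 0)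

/-- `b_p(χ)`: the second-smallest `p`-adic valuation among the weights. -/
def bval (p : ℕ) {n : ℕ} (χ : Fin (n + 1) → ℕ) : ℕ :=
  secondMin (Finset.univ.val.map fun i => (χ i).factorization p)

/-- The normalization `N(χ)` of a weight vector, characterized by
`v_p(N(χ)_i) = max (v_p(χ_i) - b_p(χ)) 0` for all primes `p`. -/
def normalizeWt {n : ℕ} (χ : Fin (n + 1) → ℕ) : Fin (n + 1) → ℕ :=
  fun i => ∏ p ∈ (χ i).primeFactors, p ^ ((χ i).factorization p - bval p χ)

end

/-!
`N(χ)` only sees each valuation through `v_p(χᵢ) - b_p(χ)`, which vanishes at the two indices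
realising `b_p(χ)`; so `N(χ)` is normalized.

The homeomorphism is by induction on `∑ χᵢ`. If `χ` is not normalized, some prime `p` divides every
weight except possibly `χⱼ`. If `p ∣ χⱼ` as well, then `ℙ(χ) = ℙ(χ / p)`, since `g ↦ g ^ p` is onto
`S¹`, and `N(χ) = N(χ / p)`. Otherwise `[z] ↦ [z₀ : … : zⱼ ^ p : … : zₙ]` is a continuous bijection
`ℙ(χ) → ℙ(χ₀, …, p χⱼ, …, χₙ)` of compact Hausdorff spaces: it is injective because, as `p ∤ χⱼ`
and `p ∣ χᵢ` for `i ≠ j`, the `p`-th root of unity by which two preimages of `zⱼ ^ p` differ is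
`η ^ χⱼ` for some `η` acting trivially on the other coordinates. Raising the unique smallest
`p`-adic valuation by one leaves `b_p`, hence `N`, unchanged, and we are back in the first case.
-/

open Finset Function

section Weights

theorem secondMin_le_iff {s : Multiset ℕ} (hs : 2 ≤ Multiset.card s) {x : ℕ} :
    secondMin s ≤ x ↔ 2 ≤ s.countP (· ≤ x) := by
  have hsorted := Multiset.pairwise_sort s (· ≤ ·)
  have hlen := Multiset.length_sort (s := s) (· ≤ ·)
  conv_rhs => rw [← Multiset.sort_eq s (· ≤ ·)]
  unfold secondMin
  rcases hl : s.sort (· ≤ ·) with _ | ⟨a, _ | ⟨b, t⟩⟩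
  · simp [hl] at hlen; omega
  · simp [hl] at hlen; omega
  rw [hl] at hsorted
  simp only [List.pairwise_cons, List.mem_cons, forall_eq_or_imp] at hsorted
  obtain ⟨⟨hab, -⟩, hbt, -⟩ := hsorted
  simp only [List.getD_cons_succ, List.getD_cons_zero, Multiset.coe_countP, List.countP_cons]
  refine ⟨fun hbx => by simp [hbx, hab.trans hbx], fun h => not_lt.1 fun hxb => ?_⟩
  have ht : t.countP (· ≤ x) = 0 :=
    List.countP_eq_zero.2 fun y hy => by simpa using hxb.trans_le (hbt y hy)
  simp only [ht, not_le.2 hxb, decide_false] at h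
  split_ifs at h <;> omega

variable {n : ℕ}

theorem bval_le_iff (hn : 1 ≤ n) (p : ℕ) (χ : Fin (n + 1) → ℕ) (x : ℕ) :
    bval p χ ≤ x ↔ 2 ≤ #{i | (χ i).factorization p ≤ x} := by
  rw [bval, secondMin_le_iff (by simp; omega), Multiset.countP_map]
  rfl

theorem exists_ne_factorization_le_bval (hn : 1 ≤ n) (p : ℕ) (χ : Fin (n + 1) → ℕ) :
    ∃ i j, i ≠ j ∧ (χ i).factorization p ≤ bval p χ ∧ (χ j).factorization p ≤ bval p χ := by
  obtain ⟨i, hi, j, hj, hij⟩ := one_lt_card.1 ((bval_le_iff hn p χ _).1 le_rfl)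
  exact ⟨i, j, hij, (mem_filter.1 hi).2, (mem_filter.1 hj).2⟩

theorem bval_congr {p : ℕ} {χ χ' : Fin (n + 1) → ℕ}
    (h : ∀ i, (χ i).factorization p = (χ' i).factorization p) : bval p χ = bval p χ' := by
  simp only [bval, h]

theorem factorization_normalizeWt (χ : Fin (n + 1) → ℕ) (i : Fin (n + 1)) (p : ℕ) :
    (normalizeWt χ i).factorization p = (χ i).factorization p - bval p χ := by
  have hpow {q : ℕ} (hq : q ∈ (χ i).primeFactors) (e : ℕ) :
      (q ^ e).factorization p = if q = p then e else 0 := by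
    simp [(Nat.prime_of_mem_primeFactors hq).factorization_pow, Finsupp.single_apply]
  rw [normalizeWt,
    Nat.factorization_prod fun q hq => pow_ne_zero _ (Nat.pos_of_mem_primeFactors hq).ne',
    sum_apply', sum_congr rfl fun q hq => hpow hq _, sum_ite_eq']
  split_ifs with hp
  · rfl
  · rw [← Nat.support_factorization, Finsupp.notMem_support_iff] at hp
    rw [hp, zero_tsub]

theorem normalizeWt_ne_zero (χ : Fin (n + 1) → ℕ) (i : Fin (n + 1)) : normalizeWt χ i ≠ 0 :=
  prod_ne_zero_iff.2 fun _ hq => pow_ne_zero _ (Nat.pos_of_mem_primeFactors hq).ne'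

theorem normalizeWt_ext {χ χ' : Fin (n + 1) → ℕ}
    (h : ∀ p i, (χ i).factorization p - bval p χ = (χ' i).factorization p - bval p χ') :
    normalizeWt χ = normalizeWt χ' :=
  funext fun i => Nat.eq_of_factorization_eq (normalizeWt_ne_zero χ i) (normalizeWt_ne_zero χ' i)
    fun p => by rw [factorization_normalizeWt, factorization_normalizeWt, h]

def IsNormalizedWt (χ : Fin (n + 1) → ℕ) : Prop :=
  ∀ p : ℕ, p.Prime → ∃ i j, i ≠ j ∧ ¬ p ∣ χ i ∧ ¬ p ∣ χ j

theorem isNormalizedWt_normalizeWt (hn : 1 ≤ n) (χ : Fin (n + 1) → ℕ) :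
    IsNormalizedWt (normalizeWt χ) := by
  intro p hp
  have hndvd {i} (hi : (χ i).factorization p ≤ bval p χ) : ¬ p ∣ normalizeWt χ i := by
    rw [hp.dvd_iff_one_le_factorization (normalizeWt_ne_zero χ i), factorization_normalizeWt]
    omega
  obtain ⟨i, j, hij, hi, hj⟩ := exists_ne_factorization_le_bval hn p χ
  exact ⟨i, j, hij, hndvd hi, hndvd hj⟩

theorem bval_eq_zero_of_isNormalizedWt (hn : 1 ≤ n) {χ : Fin (n + 1) → ℕ} (hχ : IsNormalizedWt χ)
    {p : ℕ} (hp : p.Prime) : bval p χ = 0 := by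
  obtain ⟨i, j, hij, hi, hj⟩ := hχ p hp
  refine Nat.le_zero.1 ((bval_le_iff hn p χ 0).2 ?_)
  calc 2 = #{i, j} := (card_pair hij).symm
    _ ≤ _ := card_le_card fun k hk => by
      rcases mem_insert.1 hk with rfl | hk
      · simp [Nat.factorization_eq_zero_of_not_dvd hi]
      · simp [mem_singleton.1 hk, Nat.factorization_eq_zero_of_not_dvd hj]

theorem normalizeWt_eq_self (hn : 1 ≤ n) {χ : Fin (n + 1) → ℕ} (hχ : ∀ i, 0 < χ i)
    (hnorm : IsNormalizedWt χ) : normalizeWt χ = χ :=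
  funext fun i => Nat.eq_of_factorization_eq (normalizeWt_ne_zero χ i) (hχ i).ne' fun p => by
    rw [factorization_normalizeWt]
    by_cases hp : p.Prime
    · rw [bval_eq_zero_of_isNormalizedWt hn hnorm hp, Nat.sub_zero]
    · simp [Nat.factorization_eq_zero_of_not_prime _ hp]

theorem bval_const_mul (hn : 1 ≤ n) {d : ℕ} (hd : d ≠ 0) {χ : Fin (n + 1) → ℕ}
    (hχ : ∀ i, χ i ≠ 0) (p : ℕ) :
    bval p (fun i => d * χ i) = d.factorization p + bval p χ := by
  refine eq_of_forall_ge_iff fun x => ?_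
  simp only [bval_le_iff hn, Nat.factorization_mul hd (hχ _), Finsupp.add_apply]
  rcases le_or_gt (d.factorization p) x with h | h
  · obtain ⟨y, rfl⟩ := Nat.exists_eq_add_of_le h
    simp only [Nat.add_le_add_iff_left, bval_le_iff hn]
  · have : #{i | d.factorization p + (χ i).factorization p ≤ x} = 0 := by
      simp only [card_eq_zero, filter_eq_empty_iff]
      omega
    omega

theorem normalizeWt_const_mul (hn : 1 ≤ n) {d : ℕ} (hd : d ≠ 0) {χ : Fin (n + 1) → ℕ}
    (hχ : ∀ i, χ i ≠ 0) : normalizeWt (fun i => d * χ i) = normalizeWt χ :=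
  normalizeWt_ext fun p i => by
    rw [bval_const_mul hn hd hχ, Nat.factorization_mul hd (hχ i), Finsupp.add_apply]
    omega

theorem bval_update_mul (hn : 1 ≤ n) {p : ℕ} (hp : p.Prime) {χ : Fin (n + 1) → ℕ}
    (hχ : ∀ i, χ i ≠ 0) {j : Fin (n + 1)} (hj : (χ j).factorization p < bval p χ) :
    bval p (update χ j (p * χ j)) = bval p χ := by
  have hv (i) : (update χ j (p * χ j) i).factorization p =
      (χ i).factorization p + if i = j then 1 else 0 := by
    rcases eq_or_ne i j with rfl | hij
    · simp [Nat.factorization_mul hp.ne_zero (hχ _), hp.factorization_self, add_comm]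
    · simp [hij]
  refine eq_of_forall_ge_iff fun x => ?_
  simp only [bval_le_iff hn, hv]
  by_cases hx : (χ j).factorization p < x
  · congr! 3 with i
    split_ifs with hij
    · subst hij; omega
    · simp
  · have hlt : ¬ 2 ≤ #{i | (χ i).factorization p ≤ x} := by
      rw [← bval_le_iff hn]; omega
    have hle : #{i | (χ i).factorization p + (if i = j then 1 else 0) ≤ x} ≤
        #{i | (χ i).factorization p ≤ x} :=
      card_le_card (monotone_filter_right _ fun i _ h => le_trans (Nat.le_add_right _ _) h)
    omega

theorem normalizeWt_update_mul (hn : 1 ≤ n) {p : ℕ} (hp : p.Prime) {χ : Fin (n + 1) → ℕ}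
    (hχ : ∀ i, χ i ≠ 0) {j : Fin (n + 1)} (hj : (χ j).factorization p < bval p χ) :
    normalizeWt (update χ j (p * χ j)) = normalizeWt χ :=
  normalizeWt_ext fun q i => by
    rcases eq_or_ne q p with rfl | hqp
    · rw [bval_update_mul hn hp hχ hj]
      rcases eq_or_ne i j with rfl | hij
      · simp only [update_self, Nat.factorization_mul hp.ne_zero (hχ i),
          Finsupp.add_apply, hp.factorization_self]
        omega
      · rw [update_of_ne hij]
    · have hv (k) : (update χ j (p * χ j) k).factorization q = (χ k).factorization q := by
        rcases eq_or_ne k j with rfl | hkj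
        · simp [Nat.factorization_mul hp.ne_zero (hχ k), hp.factorization, hqp.symm]
        · rw [update_of_ne hkj]
      rw [bval_congr hv, hv]

theorem bval_pos (hn : 1 ≤ n) {p : ℕ} (hp : p.Prime) {χ : Fin (n + 1) → ℕ}
    (hχ : ∀ i, χ i ≠ 0) {j : Fin (n + 1)} (hdvd : ∀ i, i ≠ j → p ∣ χ i) : 0 < bval p χ := by
  obtain ⟨i, i', hii', hi, hi'⟩ := exists_ne_factorization_le_bval hn p χ
  obtain ⟨k, hkj, hk⟩ : ∃ k, k ≠ j ∧ (χ k).factorization p ≤ bval p χ := by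
    rcases eq_or_ne i j with rfl | hij
    exacts [⟨i', hii'.symm, hi'⟩, ⟨i, hij, hi⟩]
  exact ((hp.dvd_iff_one_le_factorization (hχ k)).1 (hdvd k hkj)).trans hk

theorem exists_prime_forall_ne_dvd_of_not_isNormalizedWt {χ : Fin (n + 1) → ℕ}
    (h : ¬ IsNormalizedWt χ) : ∃ p, p.Prime ∧ ∃ j, ∀ i, i ≠ j → p ∣ χ i := by
  simp only [IsNormalizedWt, not_forall, not_exists, not_and, not_not] at h
  obtain ⟨p, hp, h⟩ := h
  refine ⟨p, hp, ?_⟩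
  by_cases hj : ∃ j, ¬ p ∣ χ j
  · obtain ⟨j, hj⟩ := hj
    exact ⟨j, fun i hij => h j i hij.symm hj⟩
  · exact ⟨0, fun i _ => not_not.1 (not_exists.1 hj i)⟩

theorem dvd_update_mul {p : ℕ} {χ : Fin (n + 1) → ℕ} {j : Fin (n + 1)}
    (hdvd : ∀ i, i ≠ j → p ∣ χ i) (i : Fin (n + 1)) : p ∣ update χ j (p * χ j) i := by
  rcases eq_or_ne i j with rfl | hij
  · simp
  · simpa [hij] using hdvd i hij

theorem update_mul_pos {p : ℕ} (hp : 0 < p) {χ : Fin (n + 1) → ℕ} (hχ : ∀ i, 0 < χ i)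
    {j : Fin (n + 1)} (i : Fin (n + 1)) : 0 < update χ j (p * χ j) i := by
  rcases eq_or_ne i j with rfl | hij
  · simpa using Nat.mul_pos hp (hχ i)
  · simpa [hij] using hχ i

theorem sum_update_mul_div_lt (hn : 1 ≤ n) {p : ℕ} (hp : 1 < p) {χ : Fin (n + 1) → ℕ}
    (hχ : ∀ i, 0 < χ i) (j : Fin (n + 1)) : ∑ i, update χ j (p * χ j) i / p < ∑ i, χ i := by
  have : Nontrivial (Fin (n + 1)) := Fin.nontrivial_iff_two_le.2 (by omega)
  obtain ⟨i₀, hi₀⟩ := exists_ne j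
  refine sum_lt_sum (fun i _ => ?_) ⟨i₀, mem_univ _, ?_⟩
  · rcases eq_or_ne i j with rfl | hij
    · simp [show 0 < p by omega]
    · simpa [hij] using Nat.div_le_self _ _
  · simpa [hi₀] using Nat.div_lt_self (hχ i₀) hp

end Weights

section Topology

variable {n : ℕ}

theorem USphere.normSq_le_one (z : USphere n) (i : Fin (n + 1)) : Complex.normSq (z.1 i) ≤ 1 :=
  (single_le_sum (fun k _ => Complex.normSq_nonneg (z.1 k)) (mem_univ i)).trans_eq z.2

instance : T2Space (USphere n) := instT2SpaceSubtype

instance : CompactSpace (USphere n) := by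
  refine isCompact_iff_compactSpace.1 ((isCompact_univ_pi fun _ => isCompact_closedBall 0 1)
    |>.of_isClosed_subset (isClosed_eq (by fun_prop) continuous_const) fun z hz i _ => ?_)
  rw [mem_closedBall_zero_iff, ← sq_le_one_iff₀ (norm_nonneg _), ← Complex.normSq_eq_norm_sq]
  exact USphere.normSq_le_one ⟨z, hz⟩ i

instance (χ : Fin (n + 1) → ℕ) : CompactSpace (WProj n χ) := Quotient.compactSpace

def wsmul (χ : Fin (n + 1) → ℕ) (g : Circle) (z : USphere n) : USphere n :=
  ⟨fun i => (g : ℂ) ^ χ i * z.1 i, by simpa using z.2⟩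

theorem continuous_wsmul (χ : Fin (n + 1) → ℕ) :
    Continuous fun gz : Circle × USphere n => wsmul χ gz.1 gz.2 :=
  .subtype_mk (continuous_pi fun i => ((continuous_subtype_val.comp continuous_fst).pow _).mul
    ((continuous_apply i).comp (continuous_subtype_val.comp continuous_snd))) _

theorem wpSetoid_iff {χ : Fin (n + 1) → ℕ} {z w : USphere n} :
    wpSetoid n χ z w ↔ ∃ g : Circle, wsmul χ g z = w :=
  ⟨fun ⟨g, hg, h⟩ => ⟨⟨g, mem_sphere_zero_iff_norm.2 hg⟩, Subtype.ext (funext h)⟩,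
    fun ⟨g, hgz⟩ => ⟨g, Circle.norm_coe g, fun _ => hgz ▸ rfl⟩⟩

theorem isOpenQuotientMap_mk_wpSetoid (χ : Fin (n + 1) → ℕ) :
    IsOpenQuotientMap (Quotient.mk (wpSetoid n χ)) := by
  refine ⟨Quotient.mk_surjective, continuous_quotient_mk', fun U hU => ?_⟩
  have : Quotient.mk (wpSetoid n χ) ⁻¹' (Quotient.mk _ '' U) = ⋃ g : Circle, wsmul χ g ⁻¹' U := by
    ext z
    simp only [Set.mem_preimage, Set.mem_image, Set.mem_iUnion]
    constructor
    · rintro ⟨u, hu, hzu⟩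
      obtain ⟨g, rfl⟩ := wpSetoid_iff.1 (Quotient.exact hzu.symm)
      exact ⟨g, hu⟩
    · rintro ⟨g, hg⟩
      exact ⟨_, hg, (Quotient.sound (wpSetoid_iff.2 ⟨g, rfl⟩)).symm⟩
  change IsOpen (Quotient.mk (wpSetoid n χ) ⁻¹' _)
  rw [this]
  exact isOpen_iUnion fun g => hU.preimage ((continuous_wsmul χ).comp (Continuous.prodMk_right g))

instance (χ : Fin (n + 1) → ℕ) : T2Space (WProj n χ) := by
  change T2Space (Quotient (wpSetoid n χ))
  rw [t2Space_iff_of_isOpenQuotientMap (isOpenQuotientMap_mk_wpSetoid χ)]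
  convert (isCompact_range (continuous_snd.prodMk (continuous_wsmul χ))).isClosed
  ext ⟨z, w⟩
  simp [Quotient.eq, wpSetoid_iff]

theorem nonempty_homeomorph_of_wpSetoid_iff {χ χ' : Fin (n + 1) → ℕ} (f : USphere n → USphere n)
    (hf : Continuous f) (hsurj : Surjective f)
    (hrel : ∀ z w, wpSetoid n χ z w ↔ wpSetoid n χ' (f z) (f w)) :
    Nonempty (WProj n χ ≃ₜ WProj n χ') := by
  let F : WProj n χ → WProj n χ' := Quotient.map' f fun z w => (hrel z w).1
  have hF : F.Bijective := by
    refine ⟨fun x y hxy => ?_, fun y => ?_⟩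
    · induction x using Quotient.inductionOn
      induction y using Quotient.inductionOn
      exact Quotient.sound ((hrel _ _).2 (Quotient.exact hxy))
    · induction y using Quotient.inductionOn with | h w => ?_
      obtain ⟨z, rfl⟩ := hsurj w
      exact ⟨Quotient.mk _ z, rfl⟩
  exact ⟨(hf.quotient_map' fun z w => (hrel z w).1).homeoOfEquivCompactToT2
    (f := .ofBijective F hF)⟩

theorem Circle.exists_pow_eq {d : ℕ} (hd : d ≠ 0) (g : Circle) : ∃ h : Circle, h ^ d = g := by
  obtain ⟨t, rfl⟩ := Circle.exp_surjective g
  refine ⟨Circle.exp (t / d), ?_⟩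
  rw [← Circle.exp_natCast_mul, mul_div_cancel₀ _ (Nat.cast_ne_zero.2 hd)]

theorem wsmul_const_mul (d : ℕ) (χ : Fin (n + 1) → ℕ) (g : Circle) :
    wsmul (fun i => d * χ i) g = wsmul χ (g ^ d) :=
  funext fun z => Subtype.ext (funext fun i => by simp [wsmul, pow_mul])

theorem wpSetoid_const_mul {d : ℕ} (hd : d ≠ 0) (χ : Fin (n + 1) → ℕ) :
    wpSetoid n (fun i => d * χ i) = wpSetoid n χ := by
  ext z w
  simp only [wpSetoid_iff, wsmul_const_mul]
  refine ⟨fun ⟨g, hg⟩ => ⟨g ^ d, hg⟩, fun ⟨g, hg⟩ => ?_⟩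
  obtain ⟨h, rfl⟩ := Circle.exists_pow_eq hd g
  exact ⟨h, hg⟩

theorem nonempty_homeomorph_div {p : ℕ} (hp : p ≠ 0) {χ : Fin (n + 1) → ℕ} (hdvd : ∀ i, p ∣ χ i) :
    Nonempty (WProj n χ ≃ₜ WProj n (fun i => χ i / p)) := by
  refine nonempty_homeomorph_of_wpSetoid_iff id continuous_id surjective_id fun z w => ?_
  rw [← wpSetoid_const_mul hp (fun i => χ i / p), funext fun i => Nat.mul_div_cancel' (hdvd i)]
  rfl

end Topology

section PowMap

open Complex

variable {n : ℕ}

theorem sum_normSq_update (v : Fin (n + 1) → ℂ) (j : Fin (n + 1)) (x : ℂ) :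
    ∑ i, normSq (update v j x i) = ∑ i, normSq (v i) - normSq (v j) + normSq x := by
  simp_rw [Function.apply_update (fun _ => normSq), sum_update_of_mem (mem_univ j),
    sum_eq_add_sum_sdiff_singleton_of_mem (mem_univ j) (fun i => normSq (v i))]
  ring

def powCoord (p : ℕ) (j : Fin (n + 1)) (z : USphere n) : Fin (n + 1) → ℂ :=
  update z.1 j (z.1 j ^ p)

theorem sum_normSq_powCoord (p : ℕ) (j : Fin (n + 1)) (z : USphere n) :
    ∑ i, normSq (powCoord p j z i) = 1 - normSq (z.1 j) + normSq (z.1 j) ^ p := by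
  rw [powCoord, sum_normSq_update, z.2, map_pow]

theorem one_sub_add_pow_pos {a : ℝ} (ha : 0 ≤ a) (ha' : a ≤ 1) (p : ℕ) : 0 < 1 - a + a ^ p := by
  rcases ha'.lt_or_eq with h | rfl
  · linarith [pow_nonneg ha p]
  · simp

theorem sum_normSq_powCoord_pos (p : ℕ) (j : Fin (n + 1)) (z : USphere n) :
    0 < ∑ i, normSq (powCoord p j z i) := by
  rw [sum_normSq_powCoord]
  exact one_sub_add_pow_pos (normSq_nonneg _) (z.normSq_le_one j) p

theorem sum_normSq_ofReal_mul (c : ℝ) (v : Fin (n + 1) → ℂ) :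
    ∑ i, normSq (c * v i) = c ^ 2 * ∑ i, normSq (v i) := by
  simp [mul_sum, sq]

noncomputable def powMap (p : ℕ) (j : Fin (n + 1)) (z : USphere n) : USphere n :=
  ⟨fun i => ((√(∑ k, normSq (powCoord p j z k)))⁻¹ : ℝ) * powCoord p j z i, by
    rw [sum_normSq_ofReal_mul, inv_pow, Real.sq_sqrt (sum_normSq_powCoord_pos p j z).le,
      inv_mul_cancel₀ (sum_normSq_powCoord_pos p j z).ne']⟩

theorem powMap_apply (p : ℕ) (j : Fin (n + 1)) (z : USphere n) (i : Fin (n + 1)) :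
    (powMap p j z).1 i = ((√(∑ k, normSq (powCoord p j z k)))⁻¹ : ℝ) * powCoord p j z i :=
  rfl

theorem continuous_powMap (p : ℕ) (j : Fin (n + 1)) : Continuous (powMap (n := n) p j) := by
  have hcoord : Continuous (powCoord (n := n) p j) :=
    continuous_subtype_val.update j (((continuous_apply j).comp continuous_subtype_val).pow p)
  refine .subtype_mk (continuous_pi fun i => .mul (continuous_ofReal.comp (.inv₀ ?_ fun z => ?_))
    ((continuous_apply i).comp hcoord)) _
  · exact Real.continuous_sqrt.comp (continuous_finsetSum _ fun k _ =>
      continuous_normSq.comp ((continuous_apply k).comp hcoord))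
  · exact (Real.sqrt_pos.2 (sum_normSq_powCoord_pos p j z)).ne'

theorem powCoord_wsmul (p : ℕ) (χ : Fin (n + 1) → ℕ) (j : Fin (n + 1)) (g : Circle)
    (z : USphere n) :
    powCoord p j (wsmul χ g z) =
      fun i => (g : ℂ) ^ update χ j (p * χ j) i * powCoord p j z i := by
  funext i
  rcases eq_or_ne i j with rfl | hij
  · simp [powCoord, wsmul, mul_pow, ← pow_mul, mul_comm]
  · simp [powCoord, wsmul, hij]

theorem powMap_wsmul (p : ℕ) (χ : Fin (n + 1) → ℕ) (j : Fin (n + 1)) (g : Circle)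
    (z : USphere n) :
    powMap p j (wsmul χ g z) = wsmul (update χ j (p * χ j)) g (powMap p j z) := by
  have hsum : ∑ k, normSq (powCoord p j (wsmul χ g z) k) = ∑ k, normSq (powCoord p j z k) := by
    simp [powCoord_wsmul]
  refine Subtype.ext (funext fun i => ?_)
  change (powMap p j (wsmul χ g z)).1 i = (g : ℂ) ^ _ * (powMap p j z).1 i
  rw [powMap_apply, powMap_apply, hsum, powCoord_wsmul]
  ring

theorem eq_of_pow_mul_one_sub_eq {p : ℕ} (hp : p ≠ 0) {a b : ℝ}
    (ha : a ∈ Set.Icc (0 : ℝ) 1) (hb : b ∈ Set.Icc (0 : ℝ) 1)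
    (h : a ^ p * (1 - b) = b ^ p * (1 - a)) : a = b := by
  by_contra hne
  wlog hab : a < b generalizing a b
  · exact this hb ha h.symm (Ne.symm hne) ((not_lt.1 hab).lt_of_ne (Ne.symm hne))
  have hpow : a ^ p < b ^ p := pow_lt_pow_left₀ hab ha.1 hp
  nlinarith [pow_nonneg ha.1 p, hb.2]

theorem normSq_powMap (p : ℕ) (j : Fin (n + 1)) (z : USphere n) (i : Fin (n + 1)) :
    normSq ((powMap p j z).1 i) = normSq (powCoord p j z i) / ∑ k, normSq (powCoord p j z k) := by
  rw [powMap_apply, normSq_mul, normSq_ofReal, ← sq, inv_pow,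
    Real.sq_sqrt (sum_normSq_powCoord_pos p j z).le, inv_mul_eq_div]

theorem powCoord_eq_of_powMap_eq {p : ℕ} (hp : p ≠ 0) {j : Fin (n + 1)} {y y' : USphere n}
    (h : powMap p j y = powMap p j y') : powCoord p j y = powCoord p j y' := by
  have hsum : ∑ k, normSq (powCoord p j y k) = ∑ k, normSq (powCoord p j y' k) := by
    have hj := congrArg (fun z : USphere n => normSq (z.1 j)) h
    simp only [normSq_powMap] at hj
    rw [div_eq_div_iff (sum_normSq_powCoord_pos p j y).ne' (sum_normSq_powCoord_pos p j y').ne',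
      sum_normSq_powCoord, sum_normSq_powCoord] at hj
    simp only [powCoord, update_self, map_pow] at hj
    -- `|(powMap p j z) j|² = a ^ p / (1 - a + a ^ p)` determines `a = |zⱼ|²`
    rw [sum_normSq_powCoord, sum_normSq_powCoord, eq_of_pow_mul_one_sub_eq hp
      ⟨normSq_nonneg _, y.normSq_le_one j⟩ ⟨normSq_nonneg _, y'.normSq_le_one j⟩
      (by linear_combination hj)]
  funext i
  have hi := congrArg (fun z : USphere n => z.1 i) h
  simp only [powMap_apply, hsum] at hi
  refine mul_left_cancel₀ ?_ hi
  exact_mod_cast (inv_pos.2 (Real.sqrt_pos.2 (sum_normSq_powCoord_pos p j y'))).ne'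

theorem Circle.exists_pow_eq_one_pow_mul_eq {p k : ℕ} (hp : p ≠ 0) (hcop : p.Coprime k) {x y : ℂ}
    (h : x ^ p = y ^ p) : ∃ η : Circle, η ^ p = 1 ∧ (η : ℂ) ^ k * x = y := by
  rcases eq_or_ne x 0 with rfl | hx
  · refine ⟨1, one_pow p, ?_⟩
    rw [zero_pow hp, eq_comm, pow_eq_zero_iff hp] at h
    simp [h]
  have hζ : (y / x) ^ p = 1 := by rw [div_pow, ← h, div_self (pow_ne_zero p hx)]
  let ζ : Circle := ⟨y / x, mem_sphere_zero_iff_norm.2 (norm_eq_one_of_pow_eq_one hζ hp)⟩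
  have hζp : ζ ^ p = 1 := Circle.ext ((Circle.coe_pow ζ p).trans hζ)
  obtain ⟨m, hm⟩ := exists_pow_eq_self_of_coprime
    (hcop.symm.coprime_dvd_right (orderOf_dvd_of_pow_eq_one hζp))
  have hmk : (ζ ^ m) ^ k = ζ := by rw [← pow_mul, mul_comm, pow_mul, hm]
  refine ⟨ζ ^ m, by rw [← pow_mul, mul_comm, pow_mul, hζp, one_pow], ?_⟩
  rw [← Circle.coe_pow, hmk]
  exact div_mul_cancel₀ y hx

theorem wpSetoid_of_powCoord_eq {p : ℕ} (hp : p ≠ 0) {χ : Fin (n + 1) → ℕ} {j : Fin (n + 1)}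
    (hcop : p.Coprime (χ j)) (hdvd : ∀ i, i ≠ j → p ∣ χ i) {y y' : USphere n}
    (h : powCoord p j y = powCoord p j y') : wpSetoid n χ y y' := by
  obtain ⟨η, hηp, hη⟩ := Circle.exists_pow_eq_one_pow_mul_eq hp hcop
    (by simpa [powCoord] using congrFun h j)
  refine wpSetoid_iff.2 ⟨η, Subtype.ext (funext fun i => ?_)⟩
  rcases eq_or_ne i j with rfl | hij
  · exact hη
  · obtain ⟨k, hk⟩ := hdvd i hij
    have hi := congrFun h i
    simp only [powCoord, update_of_ne hij] at hi
    simp [wsmul, hk, pow_mul, ← Circle.coe_pow, hηp, hi]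

theorem wpSetoid_iff_powMap {p : ℕ} (hp : p ≠ 0) {χ : Fin (n + 1) → ℕ} {j : Fin (n + 1)}
    (hcop : p.Coprime (χ j)) (hdvd : ∀ i, i ≠ j → p ∣ χ i) (z w : USphere n) :
    wpSetoid n χ z w ↔
      wpSetoid n (update χ j (p * χ j)) (powMap p j z) (powMap p j w) := by
  refine ⟨fun h => ?_, fun h => ?_⟩
  · obtain ⟨g, rfl⟩ := wpSetoid_iff.1 h
    exact wpSetoid_iff.2 ⟨g, (powMap_wsmul p χ j g z).symm⟩
  · obtain ⟨g, hg⟩ := wpSetoid_iff.1 h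
    rw [← powMap_wsmul] at hg
    exact (wpSetoid n χ).trans' (wpSetoid_iff.2 ⟨g, rfl⟩)
      (wpSetoid_of_powCoord_eq hp hcop hdvd (powCoord_eq_of_powMap_eq hp hg))

theorem exists_pos_pow_mul_add_sq_mul_eq_one {p : ℕ} (hp : p ≠ 0) {A a : ℝ} (h : 1 ≤ A + a) :
    ∃ c : ℝ, 0 < c ∧ c ^ (2 * p) * A + c ^ 2 * a = 1 := by
  obtain ⟨c, hc, hc1⟩ := intermediate_value_Icc zero_le_one
    (f := fun c : ℝ => c ^ (2 * p) * A + c ^ 2 * a) (by fun_prop : Continuous _).continuousOn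
    (show (1 : ℝ) ∈ Set.Icc _ _ from ⟨by simp [hp], by simpa using h⟩)
  refine ⟨c, hc.1.lt_of_ne ?_, hc1⟩
  rintro rfl
  simp [hp] at hc1

theorem powMap_surjective {p : ℕ} (hp : p ≠ 0) (j : Fin (n + 1)) :
    Surjective (powMap (n := n) p j) := by
  intro w
  obtain ⟨u, hu⟩ := IsAlgClosed.exists_pow_nat_eq (w.1 j) (Nat.pos_of_ne_zero hp)
  have hwu : normSq (w.1 j) ≤ normSq u := by
    rcases le_or_gt (normSq u) 1 with h1 | h1
    · rw [← hu, map_pow]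
      exact pow_le_of_le_one (normSq_nonneg u) h1 hp
    · exact (w.normSq_le_one j).trans h1.le
  obtain ⟨c, hc, hc1⟩ := exists_pos_pow_mul_add_sq_mul_eq_one hp
    (A := 1 - normSq (w.1 j)) (a := normSq u) (by linarith)
  let v : Fin (n + 1) → ℂ := fun i => ((c ^ p : ℝ) : ℂ) * w.1 i
  let z : USphere n := ⟨update v j (c * u), by
    rw [sum_normSq_update, sum_normSq_ofReal_mul, w.2]
    simp only [v, normSq_mul, normSq_ofReal]
    linear_combination hc1⟩
  have hz : powCoord p j z = v := by
    funext i
    rcases eq_or_ne i j with rfl | hij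
    · simp [powCoord, z, v, mul_pow, hu]
    · simp [powCoord, z, hij]
  refine ⟨z, Subtype.ext (funext fun i => ?_)⟩
  rw [powMap_apply, hz, sum_normSq_ofReal_mul, w.2, mul_one, Real.sqrt_sq (by positivity)]
  simp only [v, ← mul_assoc, ← ofReal_mul, inv_mul_cancel₀ (pow_pos hc p).ne', ofReal_one, one_mul]

theorem nonempty_homeomorph_update_mul {p : ℕ} (hp : p ≠ 0) {χ : Fin (n + 1) → ℕ}
    {j : Fin (n + 1)} (hcop : p.Coprime (χ j)) (hdvd : ∀ i, i ≠ j → p ∣ χ i) :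
    Nonempty (WProj n χ ≃ₜ WProj n (update χ j (p * χ j))) :=
  nonempty_homeomorph_of_wpSetoid_iff (powMap p j) (continuous_powMap p j)
    (powMap_surjective hp j) (wpSetoid_iff_powMap hp hcop hdvd)

end PowMap

theorem nonempty_homeomorph_normalizeWt {n : ℕ} (hn : 1 ≤ n) (χ : Fin (n + 1) → ℕ)
    (hχ : ∀ i, 0 < χ i) : Nonempty (WProj n χ ≃ₜ WProj n (normalizeWt χ)) := by
  by_cases hnorm : IsNormalizedWt χ
  · rw [normalizeWt_eq_self hn hχ hnorm]
    exact ⟨.refl _⟩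
  obtain ⟨p, hp, j, hdvd⟩ := exists_prime_forall_ne_dvd_of_not_isNormalizedWt hnorm
  have hχ0 i : χ i ≠ 0 := (hχ i).ne'
  have descend (χ' : Fin (n + 1) → ℕ) (hdvd' : ∀ i, p ∣ χ' i) (hχ' : ∀ i, 0 < χ' i)
      (hlt : ∑ i, χ' i / p < ∑ i, χ i) : Nonempty (WProj n χ' ≃ₜ WProj n (normalizeWt χ')) := by
    have hpos i : 0 < χ' i / p := Nat.div_pos (Nat.le_of_dvd (hχ' i) (hdvd' i)) hp.pos
    obtain ⟨e⟩ := nonempty_homeomorph_div hp.ne_zero hdvd'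
    obtain ⟨e'⟩ := nonempty_homeomorph_normalizeWt hn (fun i => χ' i / p) hpos
    rw [← normalizeWt_const_mul hn hp.ne_zero fun i => (hpos i).ne',
      funext fun i => Nat.mul_div_cancel' (hdvd' i)] at e'
    exact ⟨e.trans e'⟩
  by_cases hj : p ∣ χ j
  · refine descend χ (fun i => (eq_or_ne i j).elim (· ▸ hj) (hdvd i)) hχ ?_
    exact sum_lt_sum_of_nonempty univ_nonempty fun i _ => Nat.div_lt_self (hχ i) hp.one_lt
  · obtain ⟨e⟩ := nonempty_homeomorph_update_mul hp.ne_zero (hp.coprime_iff_not_dvd.2 hj) hdvd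
    obtain ⟨e'⟩ := descend _ (dvd_update_mul hdvd) (update_mul_pos hp.pos hχ)
      (sum_update_mul_div_lt hn hp.one_lt hχ j)
    rw [normalizeWt_update_mul hn hp hχ0 (by
      rw [Nat.factorization_eq_zero_of_not_dvd hj]; exact bval_pos hn hp hχ0 hdvd)] at e'
    exact ⟨e.trans e'⟩
termination_by ∑ i, χ i

/-- The normalization `N(χ)` of a weight vector is a normalized weight vector
(for every prime `p`, at least two of its entries are not divisible by `p`), and `ℙ(χ)` is
homeomorphic to `ℙ(N(χ))`. -/
theorem normalizeWt_normalized_and_homeomorph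
    (n : ℕ) (hn : 1 ≤ n) (χ : Fin (n + 1) → ℕ) (hχ : ∀ i, 0 < χ i) :
    (∀ p : ℕ, p.Prime → ∃ i j : Fin (n + 1), i ≠ j ∧
        ¬ p ∣ normalizeWt χ i ∧ ¬ p ∣ normalizeWt χ j) ∧
    Nonempty (WProj n χ ≃ₜ WProj n (normalizeWt χ)) :=
  ⟨isNormalizedWt_normalizeWt hn χ, nonempty_homeomorph_normalizeWt hn χ hχ⟩
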